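/- Let $(\gamma_n)$ be distinct real numbers, $(v_n)$ positive with $\sum v_n/(1+\gamma_n^2) < \infty$, $\varphi$ the associated Herglotz function, and $\alpha \in \mathbb{R}$. Suppose $\frac{1}{\alpha - \varphi(z)} = b + \sum_j w_j(\frac{1}{\lambda_j - z} - \frac{\lambda_j}{1+\lambda_j^2})$ on the upper half-plane, where $(\lambda_j)$ are distinct reals, $w_j > 0$, $\sum_j w_j/(1+\lambda_j^2) < \infty$, and $b \in \mathbb{R}$. Then each $\lambda_j$ belongs to $(\Gamma,v)^*$, satisfies $\varphi(\lambda_j) = \alpha$, and $w_j = \big(\sum_n \frac{v_n}{(\lambda_j - \gamma_n)^2}\big)^{-1}$. -/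

import Mathlib

/-!
Fix `j`, put `L = λⱼ` and approach `L` vertically, `z = L + iε` with `ε → 0⁺`. Every term of the
series for `1/(α - φ)` other than the `j`-th is `o(1/ε)` uniformly (dominated convergence), so
`-iε/(α - φ(L + iε)) → wⱼ`, i.e. `i(α - φ(L + iε))/ε → 1/wⱼ`. Imaginary part:
`Im φ(L + iε)/ε = ∑ vₙ/((L - γₙ)² + ε²)` tends to `1/wⱼ`; this forces `L ≠ γₙ` (a coinciding
pole would contribute `vₙ/ε²`), the summability of `∑ vₙ/(L - γₙ)²` and its value `1/wⱼ`.
Real part: `Re φ(L + iε) → α`, while that summability gives a dominating bound under which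
`φ(L + iε) → φ(L)`.
-/

open Complex Filter Topology

noncomputable def herglotzKernel (t : ℝ) (z : ℂ) : ℂ :=
  1 / ((t : ℂ) - z) - (t : ℂ) / (1 + (t : ℂ) ^ 2)

/-- `herglotzSeries v γ` is the paper's `φ`. -/
noncomputable def herglotzSeries (c t : ℕ → ℝ) (z : ℂ) : ℂ :=
  ∑' n, (c n : ℂ) * herglotzKernel (t n) z

lemma one_add_ofReal_sq (t : ℝ) : 1 + (t : ℂ) ^ 2 = ((1 + t ^ 2 : ℝ) : ℂ) := by push_cast; ring

lemma herglotzKernel_eq_div {t : ℝ} {z : ℂ} (hz : (t : ℂ) - z ≠ 0) :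
    herglotzKernel t z = (1 + t * z) / ((t - z) * (1 + (t : ℂ) ^ 2)) := by
  have : (1 + (t : ℂ) ^ 2) ≠ 0 := by rw [one_add_ofReal_sq]; norm_cast; positivity
  rw [herglotzKernel]; field_simp; ring

lemma norm_herglotzKernel {t : ℝ} {z : ℂ} (hz : (t : ℂ) - z ≠ 0) :
    ‖herglotzKernel t z‖ = ‖1 + t * z‖ / (‖(t : ℂ) - z‖ * (1 + t ^ 2)) := by
  rw [herglotzKernel_eq_div hz, norm_div, norm_mul, one_add_ofReal_sq, norm_real,
    Real.norm_of_nonneg (by positivity)]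

lemma norm_one_add_ofReal_mul_le (t : ℝ) (z : ℂ) : ‖1 + t * z‖ ≤ 1 + |t| * ‖z‖ := by
  simpa [norm_mul] using norm_add_le (1 : ℂ) (t * z)

lemma abs_im_mul_norm_herglotzKernel_le (t : ℝ) (z : ℂ) :
    |z.im| * ‖herglotzKernel t z‖ ≤ (1 + 2 * ‖z‖ ^ 2) / (1 + t ^ 2) := by
  by_cases hz : (t : ℂ) - z = 0
  · have : z.im = 0 := by simpa using congrArg Complex.im hz
    rw [this, abs_zero, zero_mul]; positivity
  rw [norm_herglotzKernel hz, mul_div_assoc', div_le_div_iff₀ (by positivity) (by positivity)]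
  set r := ‖(t : ℂ) - z‖
  have him : |z.im| ≤ r := by simpa using abs_im_le_norm ((t : ℂ) - z)
  have hre : |z.im| ≤ ‖z‖ := abs_im_le_norm z
  have ht : |t| ≤ r + ‖z‖ := by simpa using norm_add_le ((t : ℂ) - z) z
  have hN := norm_one_add_ofReal_mul_le t z
  -- `|z.im| ≤ r` absorbs the constant, `|t| ≤ r + ‖z‖` and `|z.im| ≤ ‖z‖` the rest
  have key : |z.im| * ‖1 + t * z‖ ≤ (1 + 2 * ‖z‖ ^ 2) * r := by
    calc |z.im| * ‖1 + t * z‖ ≤ |z.im| * (1 + (r + ‖z‖) * ‖z‖) := by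
          gcongr; exact hN.trans (by gcongr)
      _ ≤ (1 + 2 * ‖z‖ ^ 2) * r := by
        have h1 : |z.im| * r * ‖z‖ ≤ ‖z‖ * r * ‖z‖ := by gcongr
        have h2 : |z.im| * ‖z‖ * ‖z‖ ≤ r * ‖z‖ * ‖z‖ := by gcongr
        nlinarith
  calc |z.im| * ‖1 + t * z‖ * (1 + t ^ 2) ≤ (1 + 2 * ‖z‖ ^ 2) * r * (1 + t ^ 2) := by gcongr
    _ = _ := by ring

lemma norm_herglotzKernel_le {t : ℝ} {z : ℂ} (ht : t ≠ z.re) :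
    ‖herglotzKernel t z‖ ≤ (1 / (z.re - t) ^ 2 + (1 + ‖z‖ ^ 2) / (1 + t ^ 2)) / 2 := by
  have hz : (t : ℂ) - z ≠ 0 := fun h => ht (by simpa using congrArg Complex.re (sub_eq_zero.1 h))
  rw [norm_herglotzKernel hz]
  set r := ‖(t : ℂ) - z‖
  set N := ‖1 + t * z‖
  have hr : |z.re - t| ≤ r := by simpa [abs_sub_comm] using abs_re_le_norm ((t : ℂ) - z)
  have hd : 0 < |z.re - t| := abs_pos.2 (sub_ne_zero.2 (Ne.symm ht))
  have hP : 0 < 1 + t ^ 2 := by positivity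
  -- Cauchy–Schwarz: `(1 + |t| ‖z‖)² ≤ (1 + t²)(1 + ‖z‖²)`
  have hN : N ^ 2 ≤ (1 + t ^ 2) * (1 + ‖z‖ ^ 2) := by
    have := norm_one_add_ofReal_mul_le t z
    have h0 : 0 ≤ N := norm_nonneg _
    nlinarith [sq_nonneg (|t| - ‖z‖), sq_abs t, abs_nonneg t, norm_nonneg z]
  have hr0 : 0 < r := hd.trans_le hr
  have hamgm : N / (r * (1 + t ^ 2)) ≤ ((1 / r) ^ 2 + (N / (1 + t ^ 2)) ^ 2) / 2 := by
    have := two_mul_le_add_sq (1 / r) (N / (1 + t ^ 2))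
    rw [show N / (r * (1 + t ^ 2)) = 1 / r * (N / (1 + t ^ 2)) by field_simp]
    linarith
  have h1 : (1 / r) ^ 2 ≤ 1 / (z.re - t) ^ 2 := by
    rw [one_div_pow, ← sq_abs (z.re - t)]; gcongr
  have h2 : (N / (1 + t ^ 2)) ^ 2 ≤ (1 + ‖z‖ ^ 2) / (1 + t ^ 2) := by
    rw [div_pow, div_le_div_iff₀ (by positivity) hP]; nlinarith
  linarith

lemma sq_norm_add_mul_I (x y : ℝ) : ‖(x : ℂ) + y * I‖ ^ 2 = x ^ 2 + y ^ 2 := by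
  rw [Complex.sq_norm, normSq_add_mul_I]

lemma summable_mul_herglotzKernel {c t : ℕ → ℝ} (hc : ∀ n, 0 ≤ c n)
    (hadm : Summable fun n => c n / (1 + t n ^ 2)) {z : ℂ} (hz : z.im ≠ 0) :
    Summable fun n => (c n : ℂ) * herglotzKernel (t n) z := by
  refine Summable.of_norm_bounded (hadm.mul_left ((1 + 2 * ‖z‖ ^ 2) / |z.im|)) fun n => ?_
  have := abs_im_mul_norm_herglotzKernel_le (t n) z
  rw [norm_mul, norm_real, Real.norm_of_nonneg (hc n)]
  calc c n * ‖herglotzKernel (t n) z‖ = c n * (|z.im| * ‖herglotzKernel (t n) z‖) / |z.im| := by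
        field_simp
    _ ≤ c n * ((1 + 2 * ‖z‖ ^ 2) / (1 + t n ^ 2)) / |z.im| := by gcongr; exact hc n
    _ = _ := by ring

lemma continuousAt_herglotzKernel {t : ℝ} {z : ℂ} (hz : (t : ℂ) - z ≠ 0) :
    ContinuousAt (herglotzKernel t) z :=
  (continuousAt_const.div (continuousAt_const.sub continuousAt_id) hz).sub continuousAt_const

lemma tendsto_neg_mul_I_mul_herglotzKernel_self (t : ℝ) :
    Tendsto (fun ε : ℝ => -(ε * I) * herglotzKernel t (t + ε * I)) (𝓝[>] 0) (𝓝 1) := by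
  have hlim : Tendsto (fun ε : ℝ => 1 + ε * I * ((t : ℂ) / (1 + (t : ℂ) ^ 2))) (𝓝[>] 0) (𝓝 1) := by
    have : Continuous fun ε : ℝ => 1 + ε * I * ((t : ℂ) / (1 + (t : ℂ) ^ 2)) := by fun_prop
    simpa using (this.tendsto 0).mono_left nhdsWithin_le_nhds
  refine hlim.congr' ?_
  filter_upwards [self_mem_nhdsWithin] with ε (hε : 0 < ε)
  have : (ε : ℂ) ≠ 0 := by exact_mod_cast hε.ne'
  simp only [herglotzKernel, sub_add_cancel_left, one_div, inv_neg, mul_inv, inv_I]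
  field_simp
  linear_combination I_sq

lemma tendsto_neg_mul_I_mul_herglotzKernel_of_ne {s t : ℝ} (h : s ≠ t) :
    Tendsto (fun ε : ℝ => -(ε * I) * herglotzKernel s (t + ε * I)) (𝓝[>] 0) (𝓝 0) := by
  have hK : ContinuousAt (fun ε : ℝ => herglotzKernel s (t + ε * I)) 0 :=
    (continuousAt_herglotzKernel (z := t) (by exact_mod_cast sub_ne_zero.2 h)).comp_of_eq
      (f := fun ε : ℝ => (t : ℂ) + ε * I) (by fun_prop) (by simp)
  have hε : ContinuousAt (fun ε : ℝ => -((ε : ℂ) * I)) 0 := by fun_prop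
  simpa using (hε.tendsto.mul hK.tendsto).mono_left nhdsWithin_le_nhds

theorem tendsto_neg_mul_I_mul_herglotzSeries {c t : ℕ → ℝ} (ht : Function.Injective t)
    (hc : ∀ n, 0 ≤ c n) (hadm : Summable fun n => c n / (1 + t n ^ 2)) (j : ℕ) :
    Tendsto (fun ε : ℝ => -(ε * I) * herglotzSeries c t (t j + ε * I)) (𝓝[>] 0) (𝓝 (c j)) := by
  have hterm : ∀ k,
      Tendsto (fun ε : ℝ => -(ε * I) * ((c k : ℂ) * herglotzKernel (t k) (t j + ε * I)))
        (𝓝[>] 0) (𝓝 (if k = j then (c j : ℂ) else 0)) := by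
    intro k
    split_ifs with hk
    · subst hk
      simpa [mul_left_comm] using
        (tendsto_neg_mul_I_mul_herglotzKernel_self (t k)).const_mul (c k : ℂ)
    · simpa [mul_left_comm] using
        (tendsto_neg_mul_I_mul_herglotzKernel_of_ne (ht.ne hk)).const_mul (c k : ℂ)
  have hbound : ∀ᶠ ε : ℝ in 𝓝[>] 0, ∀ k,
      ‖-(ε * I) * ((c k : ℂ) * herglotzKernel (t k) (t j + ε * I))‖
        ≤ (3 + 2 * t j ^ 2) * (c k / (1 + t k ^ 2)) := by
    filter_upwards [Ioo_mem_nhdsGT one_pos] with ε ⟨hε0, hε1⟩ k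
    have hK := abs_im_mul_norm_herglotzKernel_le (t k) (t j + ε * I)
    rw [sq_norm_add_mul_I] at hK
    simp only [add_im, ofReal_im, mul_im, ofReal_re, I_im, I_re, mul_zero, mul_one, zero_add,
      add_zero, abs_of_pos hε0] at hK
    rw [norm_mul, norm_mul, norm_neg, norm_mul, norm_I, norm_real, norm_real, mul_one,
      Real.norm_of_nonneg hε0.le, Real.norm_of_nonneg (hc k), mul_left_comm]
    calc c k * (ε * ‖herglotzKernel (t k) (t j + ε * I)‖)
        ≤ c k * ((1 + 2 * (t j ^ 2 + ε ^ 2)) / (1 + t k ^ 2)) := by gcongr; exact hc k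
      _ ≤ c k * ((3 + 2 * t j ^ 2) / (1 + t k ^ 2)) := by
        refine mul_le_mul_of_nonneg_left ?_ (hc k)
        gcongr ?_ / _
        nlinarith
      _ = _ := by ring
  have := tendsto_tsum_of_dominated_convergence (hadm.mul_left _) hterm hbound
  rw [tsum_ite_eq] at this
  simpa only [herglotzSeries, ← tsum_mul_left] using this

lemma tendsto_im_div_and_re_of_tendsto {F : ℝ → ℂ} {a w : ℝ} (hw : w ≠ 0)
    (h : Tendsto (fun ε : ℝ => -(ε * I) * ((a : ℂ) - F ε)⁻¹) (𝓝[>] 0) (𝓝 (w : ℂ))) :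
    Tendsto (fun ε => (F ε).im / ε) (𝓝[>] 0) (𝓝 w⁻¹) ∧
      Tendsto (fun ε => (F ε).re) (𝓝[>] 0) (𝓝 a) := by
  have hinv : Tendsto (fun ε : ℝ => ((a : ℂ) - F ε) * I / ε) (𝓝[>] 0) (𝓝 (w⁻¹ : ℝ)) := by
    rw [ofReal_inv]
    refine (h.inv₀ (by exact_mod_cast hw)).congr' ?_
    filter_upwards [self_mem_nhdsWithin] with ε (hε : 0 < ε)
    have : (ε : ℂ) ≠ 0 := by exact_mod_cast hε.ne'
    rw [mul_inv, inv_inv, inv_neg, mul_inv, inv_I]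
    field_simp
  have hre := (continuous_re.tendsto _).comp hinv
  have him := (continuous_im.tendsto _).comp hinv
  simp only [Function.comp_def, ofReal_re, ofReal_im] at hre him
  refine ⟨hre.congr fun ε => by simp [div_ofReal_re], ?_⟩
  have hdiff : Tendsto (fun ε : ℝ => (a - (F ε).re) / ε * ε) (𝓝[>] 0) (𝓝 0) := by
    simpa using (him.congr fun ε => by simp [div_ofReal_im]).mul
      (tendsto_id.mono_left nhdsWithin_le_nhds : Tendsto (fun ε : ℝ => ε) (𝓝[>] 0) (𝓝 0))
  have hlim := (tendsto_const_nhds (x := a)).sub hdiff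
  rw [sub_zero] at hlim
  refine hlim.congr' ?_
  filter_upwards [self_mem_nhdsWithin] with ε (hε : 0 < ε)
  field_simp
  ring

lemma im_herglotzKernel_add_mul_I (t x ε : ℝ) :
    (herglotzKernel t (x + ε * I)).im = ε / ((x - t) ^ 2 + ε ^ 2) := by
  rw [herglotzKernel, one_add_ofReal_sq, ← ofReal_div, sub_im, ofReal_im, sub_zero, one_div,
    inv_im, normSq_apply]
  simp only [sub_re, sub_im, add_re, add_im, ofReal_re, ofReal_im, mul_re, mul_im, I_re, I_im]
  ring_nf

lemma hasSum_div_sq_add_sq {c t : ℕ → ℝ} (hc : ∀ n, 0 ≤ c n)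
    (hadm : Summable fun n => c n / (1 + t n ^ 2)) (x : ℝ) {ε : ℝ} (hε : ε ≠ 0) :
    HasSum (fun n => c n / ((x - t n) ^ 2 + ε ^ 2)) ((herglotzSeries c t (x + ε * I)).im / ε) := by
  have hz : (x + ε * I : ℂ).im ≠ 0 := by simpa using hε
  refine ((hasSum_im (summable_mul_herglotzKernel hc hadm hz).hasSum).div_const ε).congr_fun ?_
  intro n
  rw [im_ofReal_mul, im_herglotzKernel_add_mul_I]
  field_simp

lemma ne_zero_of_tendsto_tsum_div_sq_add_sq {c d : ℕ → ℝ} (hc : ∀ n, 0 < c n) {S : ℝ}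
    (hsum : ∀ ε > 0, Summable fun n => c n / (d n ^ 2 + ε ^ 2))
    (h : Tendsto (fun ε => ∑' n, c n / (d n ^ 2 + ε ^ 2)) (𝓝[>] 0) (𝓝 S)) (n : ℕ) :
    d n ≠ 0 := by
  intro hdn
  have hblow : Tendsto (fun ε : ℝ => c n * (ε⁻¹) ^ 2) (𝓝[>] 0) atTop :=
    ((tendsto_pow_atTop two_ne_zero).comp tendsto_inv_nhdsGT_zero).const_mul_atTop (hc n)
  refine not_tendsto_nhds_of_tendsto_atTop (tendsto_atTop_mono' _ ?_ hblow) S h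
  filter_upwards [self_mem_nhdsWithin] with ε (hε : 0 < ε)
  calc c n * ε⁻¹ ^ 2 = c n / (d n ^ 2 + ε ^ 2) := by
        rw [hdn, zero_pow two_ne_zero, zero_add, div_eq_mul_inv, inv_pow]
    _ ≤ ∑' m, c m / (d m ^ 2 + ε ^ 2) :=
      (hsum ε hε).le_tsum n fun m _ => div_nonneg (hc m).le (by positivity)

lemma hasSum_div_sq_of_tendsto_tsum_div_sq_add_sq {c d : ℕ → ℝ} (hc : ∀ n, 0 ≤ c n)
    (hd : ∀ n, d n ≠ 0) {S : ℝ} (hsum : ∀ ε > 0, Summable fun n => c n / (d n ^ 2 + ε ^ 2))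
    (h : Tendsto (fun ε => ∑' n, c n / (d n ^ 2 + ε ^ 2)) (𝓝[>] 0) (𝓝 S)) :
    HasSum (fun n => c n / d n ^ 2) S := by
  have hid : Tendsto (fun ε : ℝ => ε) (𝓝[>] 0) (𝓝 0) := tendsto_id.mono_left nhdsWithin_le_nhds
  have hfin : ∀ s : Finset ℕ, ∑ n ∈ s, c n / d n ^ 2 ≤ S := by
    intro s
    have hlim : Tendsto (fun ε : ℝ => ∑ n ∈ s, c n / (d n ^ 2 + ε ^ 2)) (𝓝[>] 0)
        (𝓝 (∑ n ∈ s, c n / d n ^ 2)) :=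
      tendsto_finsetSum _ fun n _ => by
        have hden : Tendsto (fun ε : ℝ => d n ^ 2 + ε ^ 2) (𝓝[>] 0) (𝓝 (d n ^ 2)) := by
          simpa using tendsto_const_nhds.add (hid.pow 2)
        exact tendsto_const_nhds.div hden (pow_ne_zero 2 (hd n))
    refine le_of_tendsto_of_tendsto hlim h (eventually_nhdsWithin_of_forall fun ε hε => ?_)
    exact (hsum ε hε).sum_le_tsum s fun m _ => div_nonneg (hc m) (by positivity)
  have hsumm : Summable fun n => c n / d n ^ 2 :=
    summable_of_sum_le (fun n => div_nonneg (hc n) (sq_nonneg _)) hfin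
  refine (hsumm.hasSum_iff).2 (le_antisymm (hsumm.tsum_le_of_sum_le hfin) ?_)
  refine le_of_tendsto h (eventually_nhdsWithin_of_forall fun ε hε => ?_)
  refine (hsum ε hε).tsum_le_tsum (fun n => ?_) hsumm
  have := hd n
  exact div_le_div_of_nonneg_left (hc n) (by positivity) (by nlinarith [sq_nonneg ε])

lemma herglotzSeries_ofReal (c t : ℕ → ℝ) (x : ℝ) :
    herglotzSeries c t x = ((∑' n, c n * (1 / (t n - x) - t n / (1 + t n ^ 2)) : ℝ) : ℂ) := by
  rw [ofReal_tsum, herglotzSeries]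
  push_cast
  rfl

theorem tendsto_herglotzSeries_add_mul_I {c t : ℕ → ℝ} (hc : ∀ n, 0 ≤ c n)
    (hadm : Summable fun n => c n / (1 + t n ^ 2)) {x : ℝ} (hx : ∀ n, t n ≠ x)
    (hsum : Summable fun n => c n / (x - t n) ^ 2) :
    Tendsto (fun ε : ℝ => herglotzSeries c t (x + ε * I)) (𝓝 0) (𝓝 (herglotzSeries c t x)) := by
  have hterm : ∀ n, Tendsto (fun ε : ℝ => (c n : ℂ) * herglotzKernel (t n) (x + ε * I)) (𝓝 0)
      (𝓝 ((c n : ℂ) * herglotzKernel (t n) x)) := by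
    intro n
    have hK := continuousAt_herglotzKernel (t := t n) (z := x)
      (by exact_mod_cast sub_ne_zero.2 (hx n))
    have hf : ContinuousAt (fun ε : ℝ => (x : ℂ) + ε * I) 0 := by fun_prop
    have hKf := (hK.comp_of_eq hf (by simp)).tendsto.const_mul (c n : ℂ)
    simpa only [Function.comp_def, ofReal_zero, zero_mul, add_zero] using hKf
  have hbound : ∀ᶠ ε : ℝ in 𝓝 0, ∀ n, ‖(c n : ℂ) * herglotzKernel (t n) (x + ε * I)‖
      ≤ c n * ((1 / (x - t n) ^ 2 + (2 + x ^ 2) / (1 + t n ^ 2)) / 2) := by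
    filter_upwards [Ioo_mem_nhds neg_one_lt_zero one_pos] with ε ⟨h1, h2⟩ n
    have hK := norm_herglotzKernel_le (t := t n) (z := x + ε * I) (by simpa using hx n)
    rw [sq_norm_add_mul_I] at hK
    simp only [add_re, ofReal_re, mul_re, ofReal_im, I_re, I_im, mul_zero, mul_one, sub_zero,
      add_zero] at hK
    rw [norm_mul, norm_real, Real.norm_of_nonneg (hc n)]
    refine mul_le_mul_of_nonneg_left (hK.trans ?_) (hc n)
    have hε : 1 + (x ^ 2 + ε ^ 2) ≤ 2 + x ^ 2 := by nlinarith
    gcongr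
  have hsumb : Summable fun n => c n * ((1 / (x - t n) ^ 2 + (2 + x ^ 2) / (1 + t n ^ 2)) / 2) :=
    ((hsum.add (hadm.mul_left (2 + x ^ 2))).div_const 2).congr fun n => by ring
  simpa only [herglotzSeries] using tendsto_tsum_of_dominated_convergence hsumb hterm hbound

theorem stmt_11_general (γ : ℕ → ℝ) (v : ℕ → ℝ) (hv : ∀ n, 0 < v n)
    (hadm : Summable (fun n => v n / (1 + (γ n) ^ 2))) (α : ℝ)
    (l : ℕ → ℝ) (hl : Function.Injective l) (w : ℕ → ℝ) (hw : ∀ j, 0 < w j)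
    (hadm' : Summable (fun j => w j / (1 + (l j) ^ 2))) (b : ℝ)
    (heq : ∀ z : ℂ, 0 < z.im →
      ((α : ℂ) - ∑' n, (v n : ℂ) * (1 / ((γ n : ℂ) - z) - (γ n : ℂ) / (1 + (γ n : ℂ) ^ 2)))⁻¹
        = (b : ℂ) + ∑' j, (w j : ℂ) * (1 / ((l j : ℂ) - z) - (l j : ℂ) / (1 + (l j : ℂ) ^ 2))) :
    ∀ j, (∀ n, l j ≠ γ n) ∧ Summable (fun n => v n / (l j - γ n) ^ 2) ∧
      (∑' n, v n * (1 / (γ n - l j) - γ n / (1 + (γ n) ^ 2)) = α) ∧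
      w j = (∑' n, v n / (l j - γ n) ^ 2)⁻¹ := by
  intro j
  have heq' : ∀ z : ℂ, 0 < z.im →
      ((α : ℂ) - herglotzSeries v γ z)⁻¹ = b + herglotzSeries w l z := heq
  have hv0 : ∀ n, 0 ≤ v n := fun n => (hv n).le
  have hinv : Tendsto (fun ε : ℝ => -(ε * I) * ((α : ℂ) - herglotzSeries v γ (l j + ε * I))⁻¹)
      (𝓝[>] 0) (𝓝 (w j : ℂ)) := by
    have hb : Tendsto (fun ε : ℝ => -(ε * I) * (b : ℂ)) (𝓝[>] 0) (𝓝 0) := by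
      have : Continuous fun ε : ℝ => -(ε * I) * (b : ℂ) := by fun_prop
      simpa using (this.tendsto 0).mono_left nhdsWithin_le_nhds
    have hres := tendsto_neg_mul_I_mul_herglotzSeries hl (fun k => (hw k).le) hadm' j
    refine (zero_add (w j : ℂ) ▸ hb.add hres).congr' ?_
    filter_upwards [self_mem_nhdsWithin] with ε (hε : 0 < ε)
    rw [heq' _ (by simpa using hε), mul_add]
  obtain ⟨him, hre⟩ := tendsto_im_div_and_re_of_tendsto (hw j).ne' hinv
  have hsum : ∀ ε > 0, HasSum (fun n => v n / ((l j - γ n) ^ 2 + ε ^ 2))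
      ((herglotzSeries v γ (l j + ε * I)).im / ε) :=
    fun ε hε => hasSum_div_sq_add_sq hv0 hadm _ hε.ne'
  have hS : Tendsto (fun ε => ∑' n, v n / ((l j - γ n) ^ 2 + ε ^ 2)) (𝓝[>] 0) (𝓝 (w j)⁻¹) :=
    him.congr' (eventually_nhdsWithin_of_forall fun ε hε => (hsum ε hε).tsum_eq.symm)
  have hne := ne_zero_of_tendsto_tsum_div_sq_add_sq hv (fun ε hε => (hsum ε hε).summable) hS
  have hlim := hasSum_div_sq_of_tendsto_tsum_div_sq_add_sq hv0 hne
    (fun ε hε => (hsum ε hε).summable) hS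
  have hγ : ∀ n, γ n ≠ l j := fun n h => hne n (by rw [h, sub_self])
  have hreal := tendsto_herglotzSeries_add_mul_I hv0 hadm hγ hlim.summable
  have hα := tendsto_nhds_unique
    ((continuous_re.tendsto _).comp (hreal.mono_left nhdsWithin_le_nhds)) hre
  refine ⟨fun n h => hγ n h.symm, hlim.summable, ?_, by rw [hlim.tsum_eq, inv_inv]⟩
  simpa [herglotzSeries_ofReal] using hα

/-- If `1/(α - φ(z)) = b + ∑ w j (1/(λ j - z) - λ j/(1+λ j²))` on the upper half-plane,
then each `λ j` lies in `(Γ,v)*`, satisfies `φ(λ j) = α`, and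
`w j = (∑ v n/(λ j - γ n)²)⁻¹`. -/
theorem stmt_11 (γ : ℕ → ℝ) (hγ : Function.Injective γ) (v : ℕ → ℝ) (hv : ∀ n, 0 < v n)
    (hadm : Summable (fun n => v n / (1 + (γ n) ^ 2))) (α : ℝ)
    (l : ℕ → ℝ) (hl : Function.Injective l) (w : ℕ → ℝ) (hw : ∀ j, 0 < w j)
    (hadm' : Summable (fun j => w j / (1 + (l j) ^ 2))) (b : ℝ)
    (heq : ∀ z : ℂ, 0 < z.im →
      ((α : ℂ) - ∑' n, (v n : ℂ) * (1 / ((γ n : ℂ) - z) - (γ n : ℂ) / (1 + (γ n : ℂ) ^ 2)))⁻¹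
        = (b : ℂ) + ∑' j, (w j : ℂ) * (1 / ((l j : ℂ) - z) - (l j : ℂ) / (1 + (l j : ℂ) ^ 2))) :
    ∀ j, (∀ n, l j ≠ γ n) ∧ Summable (fun n => v n / (l j - γ n) ^ 2) ∧
      (∑' n, v n * (1 / (γ n - l j) - γ n / (1 + (γ n) ^ 2)) = α) ∧
      w j = (∑' n, v n / (l j - γ n) ^ 2)⁻¹ :=
  stmt_11_general γ v hv hadm α l hl w hw hadm' b heq
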